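/- (q-Vandermonde convolution, ℓ-fold version) For nonnegative integers ρ₁ ≥ ρ₂ ≥ ⋯ ≥ ρ_ℓ ≥ ρ_{ℓ+1} = 0 and s ≥ 0, one has Σ q^{Σ_{j=1}^ℓ x_j(ρ_{j+1} − (x_{j+1}+⋯+x_ℓ))} ∏_{j=1}^ℓ [ρ_j − ρ_{j+1} choose x_j]_q = [ρ₁ choose s]_q, where the sum is over all tuples (x₁,…,x_ℓ) of nonnegative integers with x₁+⋯+x_ℓ = s and x_j ≤ ρ_j − ρ_{j+1} for all j. -/

import Mathlib

open Finset

/-- The `q`-analog `[n]_q = 1 + q + ⋯ + q^{n-1}` as a rational function in `q`. -/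
noncomputable def qInt (n : ℕ) : RatFunc ℚ := ∑ i ∈ Finset.range n, RatFunc.X ^ i

/-- The `q`-factorial `[n]_q!`. -/
noncomputable def qFact : ℕ → RatFunc ℚ
  | 0 => 1
  | n + 1 => qFact n * qInt (n + 1)

/-- The Gaussian binomial coefficient `[a choose b]_q`. -/
noncomputable def qBinom (a b : ℕ) : RatFunc ℚ :=
  if b ≤ a then qFact a / (qFact b * qFact (a - b)) else 0

/-! Peeling off the first coordinate `x₁ = a` of a tuple splits its weight as
`q^{a(ρ₂ - (s - a))} [ρ₁ - ρ₂ choose a]_q` times the weight of the remaining tuple for the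
shifted sequence `ρ₂ ≥ ⋯ ≥ ρ_{ℓ+1}`. By induction the inner sum is `[ρ₂ choose s - a]_q`,
and the two-fold `q`-Vandermonde identity
`[m + n choose s]_q = Σ_{k+l=s} q^{k(n-l)} [m choose k]_q [n choose l]_q`
with `m = ρ₁ - ρ₂`, `n = ρ₂` finishes the step. The two-fold identity follows from the
`q`-Pascal rule by induction on `m`. -/

theorem qInt_ne_zero {n : ℕ} (hn : 0 < n) : qInt n ≠ 0 := by
  have hpoly : (∑ i ∈ range n, Polynomial.X ^ i : Polynomial ℚ) ≠ 0 := fun h => by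
    simpa [Polynomial.eval_finsetSum, hn.ne'] using congrArg (Polynomial.eval 1) h
  simpa [qInt, map_sum, RatFunc.algebraMap_X] using RatFunc.algebraMap_ne_zero hpoly

theorem qFact_ne_zero (n : ℕ) : qFact n ≠ 0 := by
  induction n with
  | zero => exact one_ne_zero
  | succ n ih => exact mul_ne_zero ih (qInt_ne_zero n.succ_pos)

theorem qInt_add (c d : ℕ) : qInt (c + d) = qInt c + RatFunc.X ^ c * qInt d := by
  simp only [qInt, sum_range_add, mul_sum, pow_add]

theorem qBinom_zero_right (a : ℕ) : qBinom a 0 = 1 := by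
  simp [qBinom, qFact, qFact_ne_zero]

theorem qBinom_self (a : ℕ) : qBinom a a = 1 := by
  simp [qBinom, qFact, qFact_ne_zero]

theorem qBinom_eq_zero_of_lt {a b : ℕ} (h : a < b) : qBinom a b = 0 := by
  simp [qBinom, h]

theorem qBinom_succ_succ (a b : ℕ) :
    qBinom (a + 1) (b + 1) = qBinom a (b + 1) + RatFunc.X ^ (a - b) * qBinom a b := by
  rcases lt_trichotomy a b with hab | rfl | hab
  · simp [qBinom_eq_zero_of_lt, hab, Nat.lt_succ_of_lt hab]
  · simp [qBinom_self, qBinom_eq_zero_of_lt]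
  obtain ⟨c, rfl⟩ := Nat.exists_eq_add_of_lt hab
  have hsplit : qInt (b + c + 1 + 1) = qInt (c + 1) + RatFunc.X ^ (c + 1) * qInt (b + 1) := by
    rw [← qInt_add]; ring_nf
  simp only [qBinom, if_pos (by omega : b + 1 ≤ b + c + 1 + 1),
    if_pos (by omega : b + 1 ≤ b + c + 1), if_pos (by omega : b ≤ b + c + 1), show b + c + 1 + 1 - (b + 1) = c + 1 by omega,
    show b + c + 1 - (b + 1) = c by omega, show b + c + 1 - b = c + 1 by omega, qFact, hsplit]
  have := qFact_ne_zero b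
  have := qFact_ne_zero c
  have := qInt_ne_zero c.succ_pos
  have := qInt_ne_zero b.succ_pos
  field_simp

theorem qVandermonde (m n s : ℕ) :
    ∑ p ∈ antidiagonal s, RatFunc.X ^ (p.1 * (n - p.2)) * qBinom m p.1 * qBinom n p.2 =
      qBinom (m + n) s := by
  induction m generalizing s with
  | zero =>
    rw [sum_eq_single_of_mem (0, s) (by simp) fun p hp hne => ?_]
    · simp [qBinom_zero_right]
    · have hp1 : p.1 ≠ 0 := fun h => hne (Prod.ext h (by simpa [h] using hp))
      simp [qBinom_eq_zero_of_lt (Nat.pos_of_ne_zero hp1)]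
  | succ m ih =>
    cases s with
    | zero => simp [qBinom_zero_right]
    | succ t =>
      -- unless `p.1 ≤ m` and `p.2 ≤ n` both sides vanish, so truncated subtraction is harmless
      have hshift : ∀ p ∈ antidiagonal t,
          RatFunc.X ^ ((p.1 + 1) * (n - p.2)) * (RatFunc.X ^ (m - p.1) * qBinom m p.1) *
              qBinom n p.2 =
            RatFunc.X ^ (m + n - t) *
              (RatFunc.X ^ (p.1 * (n - p.2)) * qBinom m p.1 * qBinom n p.2) := by
        intro p hp
        rw [HasAntidiagonal.mem_antidiagonal] at hp
        rcases lt_or_ge m p.1 with hm | hm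
        · simp [qBinom_eq_zero_of_lt hm]
        rcases lt_or_ge n p.2 with hn | hn
        · simp [qBinom_eq_zero_of_lt hn]
        have hexp : (p.1 + 1) * (n - p.2) + (m - p.1) = m + n - t + p.1 * (n - p.2) := by
          rw [add_mul, one_mul]; omega
        rw [← mul_assoc, ← mul_assoc, ← pow_add, hexp, pow_add]
        ring
      calc ∑ p ∈ antidiagonal (t + 1),
            RatFunc.X ^ (p.1 * (n - p.2)) * qBinom (m + 1) p.1 * qBinom n p.2
          = ∑ p ∈ antidiagonal (t + 1),
              RatFunc.X ^ (p.1 * (n - p.2)) * qBinom m p.1 * qBinom n p.2 +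
            ∑ p ∈ antidiagonal t, RatFunc.X ^ ((p.1 + 1) * (n - p.2)) *
              (RatFunc.X ^ (m - p.1) * qBinom m p.1) * qBinom n p.2 := by
            simp only [Nat.sum_antidiagonal_succ, qBinom_succ_succ, qBinom_zero_right, mul_add,
              add_mul, sum_add_distrib]
            ring
        _ = qBinom (m + n) (t + 1) + RatFunc.X ^ (m + n - t) * qBinom (m + n) t := by
            rw [sum_congr rfl hshift, ← mul_sum, ih, ih]
        _ = qBinom (m + 1 + n) (t + 1) := by
            rw [Nat.add_right_comm, qBinom_succ_succ]

theorem Finset.Nat.sum_antidiagonalTuple_succ {M : Type*} [AddCommMonoid M] (k n : ℕ)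
    (f : (Fin (k + 1) → ℕ) → M) :
    ∑ x ∈ Nat.antidiagonalTuple (k + 1) n, f x =
      ∑ p ∈ antidiagonal n, ∑ y ∈ Nat.antidiagonalTuple k p.2, f (Fin.cons p.1 y) := by
  rw [sum_sigma']
  refine sum_nbij' (fun x => ⟨(x 0, ∑ i, Fin.tail x i), Fin.tail x⟩)
    (fun p => Fin.cons p.1.1 p.2) ?_ ?_ ?_ ?_ ?_
  · intro x hx
    simp_all [Nat.mem_antidiagonalTuple, Fin.sum_univ_succ, Fin.tail]
  · intro p hp
    simp_all [Nat.mem_antidiagonalTuple, Fin.sum_cons]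
  · intro x _
    exact Fin.cons_self_tail x
  · rintro ⟨⟨a, b⟩, y⟩ hp
    simp_all [Nat.mem_antidiagonalTuple]
  · intro x _
    rw [Fin.cons_self_tail]

theorem Fin.sum_filter_zero_lt_cons {M : Type*} [AddCommMonoid M] {k : ℕ} (a : M)
    (y : Fin k → M) :
    ∑ i ∈ univ.filter (fun i : Fin (k + 1) => 0 < i), (Fin.cons a y : Fin (k + 1) → M) i =
      ∑ i, y i := by
  simp [sum_filter, Fin.sum_univ_succ, Fin.succ_pos]

theorem Fin.sum_filter_succ_lt_cons {M : Type*} [AddCommMonoid M] {k : ℕ} (a : M)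
    (y : Fin k → M) (j : Fin k) :
    ∑ i ∈ univ.filter (fun i : Fin (k + 1) => j.succ < i), (Fin.cons a y : Fin (k + 1) → M) i =
      ∑ i ∈ univ.filter (fun i : Fin k => j < i), y i := by
  simp [sum_filter, Fin.sum_univ_succ]

noncomputable def qVandermondeTerm (ρ : ℕ → ℕ) {ℓ : ℕ} (x : Fin ℓ → ℕ) : RatFunc ℚ :=
  RatFunc.X ^ (∑ j : Fin ℓ, x j * (ρ (j.val + 1) -
      ∑ i ∈ univ.filter (fun i : Fin ℓ => j < i), x i)) *
    ∏ j : Fin ℓ, qBinom (ρ j.val - ρ (j.val + 1)) (x j)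

theorem qVandermondeTerm_eq_zero (ρ : ℕ → ℕ) {ℓ : ℕ} (x : Fin ℓ → ℕ) (j : Fin ℓ)
    (hj : ρ j.val - ρ (j.val + 1) < x j) : qVandermondeTerm ρ x = 0 :=
  mul_eq_zero_of_right _ (prod_eq_zero (mem_univ j) (qBinom_eq_zero_of_lt hj))

theorem qVandermondeTerm_cons (ρ : ℕ → ℕ) {ℓ : ℕ} (a : ℕ) (y : Fin ℓ → ℕ) :
    qVandermondeTerm ρ (Fin.cons a y : Fin (ℓ + 1) → ℕ) =
      RatFunc.X ^ (a * (ρ 1 - ∑ i, y i)) * qBinom (ρ 0 - ρ 1) a *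
        qVandermondeTerm (fun i => ρ (i + 1)) y := by
  simp only [qVandermondeTerm, Fin.sum_univ_succ, Fin.prod_univ_succ, Fin.cons_zero,
    Fin.cons_succ, Fin.sum_filter_zero_lt_cons, Fin.sum_filter_succ_lt_cons, Fin.val_zero,
    Fin.val_succ, pow_add]
  ring

theorem sum_antidiagonalTuple_qVandermondeTerm (ℓ s : ℕ) (ρ : ℕ → ℕ)
    (hmono : ∀ i < ℓ, ρ (i + 1) ≤ ρ i) (hlast : ρ ℓ = 0) :
    ∑ x ∈ Nat.antidiagonalTuple ℓ s, qVandermondeTerm ρ x = qBinom (ρ 0) s := by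
  induction ℓ generalizing s ρ with
  | zero =>
    cases s with
    | zero => simp [qVandermondeTerm, qBinom_zero_right]
    | succ t => simp [hlast, qBinom_eq_zero_of_lt]
  | succ ℓ ih =>
    have hinner : ∀ p ∈ antidiagonal s,
        ∑ y ∈ Nat.antidiagonalTuple ℓ p.2, qVandermondeTerm ρ (Fin.cons p.1 y) =
          RatFunc.X ^ (p.1 * (ρ 1 - p.2)) * qBinom (ρ 0 - ρ 1) p.1 * qBinom (ρ 1) p.2 := by
      intro p _
      rw [← ih p.2 (fun i => ρ (i + 1)) (fun i hi => hmono (i + 1) (by omega)) hlast, mul_sum]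
      refine sum_congr rfl fun y hy => ?_
      rw [qVandermondeTerm_cons, Nat.mem_antidiagonalTuple.1 hy]
    rw [Nat.sum_antidiagonalTuple_succ, sum_congr rfl hinner, qVandermonde,
      Nat.sub_add_cancel (hmono 0 ℓ.succ_pos)]

/-- The `ℓ`-fold `q`-Vandermonde convolution: for `ρ₁ ≥ ⋯ ≥ ρ_ℓ ≥ ρ_{ℓ+1} = 0`
(written 0-indexed, so `ρ 0 = ρ₁` and `ρ ℓ = ρ_{ℓ+1} = 0`) and `s ≥ 0`,
`Σ q^{Σ_j x_j (ρ_{j+1} − (x_{j+1}+⋯+x_ℓ))} ∏_j [ρ_j − ρ_{j+1} choose x_j]_q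
  = [ρ₁ choose s]_q`, the sum over tuples `x` of nonnegative integers with
`Σ x_j = s` and `x_j ≤ ρ_j − ρ_{j+1}`. -/
theorem qVandermonde_multifold (ℓ s : ℕ) (ρ : ℕ → ℕ)
    (hmono : ∀ i < ℓ, ρ (i + 1) ≤ ρ i) (hlast : ρ ℓ = 0) :
    ∑ x ∈ (Finset.Nat.antidiagonalTuple ℓ s).filter
        (fun x => ∀ j : Fin ℓ, x j ≤ ρ j.val - ρ (j.val + 1)),
      (RatFunc.X : RatFunc ℚ) ^
          (∑ j : Fin ℓ, x j * (ρ (j.val + 1) -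
            ∑ i ∈ Finset.univ.filter (fun i : Fin ℓ => j < i), x i)) *
        ∏ j : Fin ℓ, qBinom (ρ j.val - ρ (j.val + 1)) (x j) =
      qBinom (ρ 0) s := by
  refine (sum_filter_of_ne fun x _ hx j => not_lt.1 fun hj => ?_).trans
    (sum_antidiagonalTuple_qVandermondeTerm ℓ s ρ hmono hlast)
  exact hx (qVandermondeTerm_eq_zero ρ x j hj)
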